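/- Let 0 < ν < 1, β = ν²/(1−ν²), γ = ν/(1−ν²), r_T, ρ_T, ρ_A > 0, R = r_T + ρ_T. Suppose τ satisfies ρ_T − ν·ρ_A/(1 + ν) ≤ ν·τ ≤ R (i.e., τ ≥ τ₂* := ρ_T/ν − ρ_A/(1+ν) and R − ντ ≥ 0). Then for every angle θ and every entry angle θ_A0, the Apollonius-circle center x_C = (R − ν·τ)·û(θ_A0) − β·ρ_A·û(θ) satisfies ‖x_C‖ ≤ r_T + γ·ρ_A. -/

import Mathlib

open Real

/-! By the triangle inequality `‖x_C‖ ≤ (R - ντ) + βρ_A`, and since `γ - β = ν / (1 + ν)`,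
the condition `ντ ≥ ρ_T - νρ_A/(1 + ν)` is exactly what makes this at most `r_T + γρ_A`. -/

noncomputable def uhat (θ : ℝ) : EuclideanSpace ℝ (Fin 2) :=
  !₂[Real.cos θ, Real.sin θ]

theorem norm_uhat (θ : ℝ) : ‖uhat θ‖ = 1 := by
  simp [uhat, EuclideanSpace.norm_eq, Fin.sum_univ_two]

theorem norm_smul_sub_smul_le_add {E : Type*} [SeminormedAddCommGroup E] [NormedSpace ℝ E]
    {a b : ℝ} {u v : E} (ha : 0 ≤ a) (hb : 0 ≤ b) (hu : ‖u‖ = 1) (hv : ‖v‖ = 1) :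
    ‖a • u - b • v‖ ≤ a + b :=
  calc ‖a • u - b • v‖ ≤ ‖a • u‖ + ‖b • v‖ := norm_sub_le _ _
    _ = a + b := by rw [norm_smul, norm_smul, hu, hv, norm_of_nonneg ha, norm_of_nonneg hb,
      mul_one, mul_one]

theorem div_one_sub_sq_sub_sq_div_one_sub_sq {ν : ℝ} (hν : ν ≠ 1) :
    ν / (1 - ν ^ 2) - ν ^ 2 / (1 - ν ^ 2) = ν / (1 + ν) := by
  have h1 : 1 - ν ≠ 0 := sub_ne_zero.mpr hν.symm
  rw [← sub_div, show 1 - ν ^ 2 = (1 - ν) * (1 + ν) by ring,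
    show ν - ν ^ 2 = (1 - ν) * ν by ring, mul_div_mul_left _ _ h1]

theorem breaching_after_critical_time_tau2_general
    (ν r_T ρ_T ρ_A τ : ℝ) (hν0 : 0 < ν) (hν1 : ν < 1)
    (hρA : 0 < ρ_A)
    (R β γ : ℝ) (hR : R = r_T + ρ_T)
    (hβ : β = ν ^ 2 / (1 - ν ^ 2)) (hγ : γ = ν / (1 - ν ^ 2))
    (hτ : ρ_T - ν * ρ_A / (1 + ν) ≤ ν * τ) (hτR : ν * τ ≤ R) :
    ∀ θ θ_A0 : ℝ,
      ‖((R - ν * τ) • uhat θ_A0 - (β * ρ_A) • uhat θ : EuclideanSpace ℝ (Fin 2))‖ ≤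
        r_T + γ * ρ_A := by
  intro θ θ_A0
  have hβ_nonneg : 0 ≤ β := by
    rw [hβ]
    exact div_nonneg (sq_nonneg ν) (by nlinarith)
  have hγβ : γ - β = ν / (1 + ν) := by
    rw [hγ, hβ]
    exact div_one_sub_sq_sub_sq_div_one_sub_sq hν1.ne
  calc _ ≤ (R - ν * τ) + β * ρ_A :=
        norm_smul_sub_smul_le_add (by linarith) (by positivity) (norm_uhat _) (norm_uhat _)
    _ ≤ r_T + γ * ρ_A := by
        have hcrit : ν * ρ_A / (1 + ν) = (γ - β) * ρ_A := by rw [hγβ, div_mul_eq_mul_div]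
        linarith

/-- If engagement begins no earlier than the critical time `τ₂* = ρ_T/ν − ρ_A/(1+ν)`
(equivalently `ρ_T − νρ_A/(1+ν) ≤ ντ`) while `ντ ≤ R`, then for every engagement angle
`θ` and every entry angle `θ_A0`, the Apollonius-circle center
`x_C = (R − ντ)û(θ_A0) − βρ_A û(θ)` satisfies `‖x_C‖ ≤ r_T + γρ_A`:
the Apollonius circle reaches into the target disk regardless of the angle. -/
theorem breaching_after_critical_time_tau2
    (ν r_T ρ_T ρ_A τ : ℝ) (hν0 : 0 < ν) (hν1 : ν < 1)
    (hrT : 0 < r_T) (hρT : 0 < ρ_T) (hρA : 0 < ρ_A)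
    (R β γ : ℝ) (hR : R = r_T + ρ_T)
    (hβ : β = ν ^ 2 / (1 - ν ^ 2)) (hγ : γ = ν / (1 - ν ^ 2))
    (hτ : ρ_T - ν * ρ_A / (1 + ν) ≤ ν * τ) (hτR : ν * τ ≤ R) :
    ∀ θ θ_A0 : ℝ,
      ‖((R - ν * τ) • uhat θ_A0 - (β * ρ_A) • uhat θ : EuclideanSpace ℝ (Fin 2))‖ ≤
        r_T + γ * ρ_A :=
  breaching_after_critical_time_tau2_general ν r_T ρ_T ρ_A τ hν0 hν1 hρA R β γ hR hβ hγ hτ hτR
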